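/- arXiv:1508.05573 — 8 statements merged into one kernel-verified Lean document; each statement's English description precedes it below -/
import Mathlib

section
/- For positive integers p, q with p/q ≥ 2, the circular clique G_{p,q} (vertex set {0,...,p-1}, edges ij with q ≤ |i-j| ≤ p-q) admits a graph homomorphism to G_{p',q'} if and only if p/q ≤ p'/q'. -/
/-- The circular clique `G_{p,q}`: vertex set `{0,...,p-1}`,
with `i` adjacent to `j` iff `q ≤ |i-j| ≤ p-q`. -/
def circClique (p q : ℕ) : SimpleGraph (Fin p) where
  Adj i j := i ≠ j ∧ q ≤ max i.val j.val - min i.val j.val ∧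
    max i.val j.val - min i.val j.val ≤ p - q
  symm := by
    constructor
    rintro i j ⟨h1, h2, h3⟩
    exact ⟨h1.symm, by rwa [max_comm, min_comm], by rwa [max_comm, min_comm]⟩
  loopless := by constructor; rintro i ⟨h, -⟩; exact h rfl

lemma circ_adj_iff {p q : ℕ} (i j : Fin p) :
    (circClique p q).Adj i j ↔ i.val ≠ j.val ∧
      ((q ≤ j.val - i.val ∧ j.val - i.val ≤ p - q) ∨
       (q ≤ i.val - j.val ∧ i.val - j.val ≤ p - q)) := by
  show (i ≠ j ∧ _) ↔ _
  rw [Ne, ← Fin.val_eq_val]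
  rcases Nat.le_total i.val j.val with h | h
  · rw [Nat.max_eq_right h, Nat.min_eq_left h]; omega
  · rw [Nat.max_eq_left h, Nat.min_eq_right h]; omega

/-- Any stable (independent) set in `G_{p,q}` with `p ≥ 2q` has at most `q` elements. -/
lemma stable_card_le {p q : ℕ} (hq : 0 < q) (hp : 2 * q ≤ p) (F : Finset (Fin p))
    (hF : ∀ v ∈ F, ∀ w ∈ F, ¬ (circClique p q).Adj v w) : F.card ≤ q := by
  by_contra hcard
  push_neg at hcard
  obtain ⟨b, hb⟩ : F.Nonempty := Finset.card_pos.mp (by omega)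
  set ρ : Fin p → ℕ := fun v => if b.val ≤ v.val then v.val - b.val else v.val + p - b.val
    with hρ
  have hrange : ∀ v ∈ F, ρ v < q ∨ (p - q < ρ v ∧ ρ v < p) := by
    intro v hv
    have hnadj := hF v hv b hb
    rw [circ_adj_iff] at hnadj
    rcases eq_or_ne v b with rfl | hne
    · left; simp only [hρ, le_refl, if_pos, Nat.sub_self]; omega
    · have hne' : v.val ≠ b.val := fun h => hne (Fin.val_injective h)
      have hb' := b.isLt; have hv' := v.isLt
      simp only [hρ]
      split_ifs with h <;> omega
  set c : Fin p → ℕ := fun v => if ρ v < q then ρ v else ρ v + q - p with hc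
  have hmaps : ∀ v ∈ F, c v ∈ Finset.range q := by
    intro v hv
    rcases hrange v hv with h | h <;> simp only [hc, Finset.mem_range] <;>
      split_ifs <;> omega
  obtain ⟨v, hv, w, hw, hvw, hcvw⟩ :=
    Finset.exists_ne_map_eq_of_card_lt_of_maps_to (by simpa using hcard) hmaps
  apply hF v hv w hw
  rw [circ_adj_iff]
  have hvb := v.isLt; have hwb := w.isLt; have hbb := b.isLt
  have hne' : v.val ≠ w.val := fun h => hvw (Fin.val_injective h)
  have h1 : (b.val ≤ v.val ∧ ρ v = v.val - b.val) ∨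
      (v.val < b.val ∧ ρ v = v.val + p - b.val) := by
    simp only [hρ]; split_ifs with h
    · exact Or.inl ⟨h, rfl⟩
    · exact Or.inr ⟨by omega, rfl⟩
  have h2 : (b.val ≤ w.val ∧ ρ w = w.val - b.val) ∨
      (w.val < b.val ∧ ρ w = w.val + p - b.val) := by
    simp only [hρ]; split_ifs with h
    · exact Or.inl ⟨h, rfl⟩
    · exact Or.inr ⟨by omega, rfl⟩
  have hr1 := hrange v hv
  have hr2 := hrange w hw
  simp only [hc] at hcvw
  split_ifs at hcvw <;> rcases h1 with ⟨hb1, he1⟩ | ⟨hb1, he1⟩ <;>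
    rcases h2 with ⟨hb2, he2⟩ | ⟨hb2, he2⟩ <;> omega

lemma mod_inv_helper {p' : ℕ} (y t : ℕ) (ht : t < p') :
    (y + p' - (y + p' - t) % p') % p' = t := by
  have hp0 : 0 < p' := by omega
  have hdm := Nat.div_add_mod (y + p' - t) p'
  have hlt : (y + p' - t) % p' < p' := Nat.mod_lt _ hp0
  have key : y + p' - (y + p' - t) % p' = t + p' * ((y + p' - t) / p') := by
    generalize p' * ((y + p' - t) / p') = m at hdm ⊢
    omega
  rw [key, Nat.add_mul_mod_self_left, Nat.mod_eq_of_lt ht]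

lemma count_lemma {p' q' : ℕ} (hq' : q' ≤ p') (y : ℕ) (hy : y < p') :
    ((Finset.range p').filter fun t => (y + p' - t) % p' < q').card = q' := by
  have hp0 : 0 < p' := by omega
  conv_rhs => rw [← Finset.card_range q']
  apply Finset.card_bij' (fun t _ => (y + p' - t) % p') (fun z _ => (y + p' - z) % p')
  · intro t ht
    simp only [Finset.mem_filter, Finset.mem_range] at ht ⊢
    exact ht.2
  · intro z hz
    simp only [Finset.mem_range] at hz
    simp only [Finset.mem_filter, Finset.mem_range]
    refine ⟨Nat.mod_lt _ hp0, ?_⟩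
    rw [mod_inv_helper y z (lt_of_lt_of_le hz hq')]
    exact hz
  · intro t ht
    simp only [Finset.mem_filter, Finset.mem_range] at ht
    exact mod_inv_helper y t ht.1
  · intro z hz
    simp only [Finset.mem_range] at hz
    exact mod_inv_helper y z (lt_of_lt_of_le hz hq')

lemma step_lemma {p q p' q' : ℕ} (hq : 0 < q) (hkey : p * q' ≤ p' * q)
    (a b : ℕ) (hab : a ≤ b) (hd1 : q ≤ b - a) (hd2 : b - a ≤ p - q) :
    a * q' / q + q' ≤ b * q' / q ∧ b * q' / q ≤ a * q' / q + (p' - q') := by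
  constructor
  · rw [Nat.le_div_iff_mul_le hq]
    have h1 : (a * q' / q) * q ≤ a * q' := Nat.div_mul_le_self _ _
    have h2 : q * q' ≤ (b - a) * q' := mul_le_mul_left hd1 q'
    have h3 : a * q' + (b - a) * q' = b * q' := by
      rw [← Nat.add_mul, Nat.add_sub_cancel' hab]
    have h4 : (a * q' / q + q') * q = (a * q' / q) * q + q' * q := Nat.add_mul _ _ _
    have h5 : q' * q = q * q' := Nat.mul_comm _ _
    omega
  · rw [Nat.div_le_iff_le_mul_add_pred hq]
    have hd := Nat.div_add_mod (a * q') q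
    have hm : a * q' % q < q := Nat.mod_lt _ hq
    have h2 : (b - a) * q' ≤ (p - q) * q' := mul_le_mul_left hd2 q'
    have h3 : (p - q) * q' ≤ (p' - q') * q := by
      rw [Nat.sub_mul, Nat.sub_mul]
      have h5 : q * q' = q' * q := Nat.mul_comm _ _
      omega
    have h4 : a * q' + (b - a) * q' = b * q' := by
      rw [← Nat.add_mul, Nat.add_sub_cancel' hab]
    have h6 : q * (a * q' / q + (p' - q')) = q * (a * q' / q) + q * (p' - q') :=
      Nat.mul_add _ _ _
    have h7 : q * (p' - q') = (p' - q') * q := Nat.mul_comm _ _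
    omega

/-- For positive integers `p, q, p', q'` with `p ≥ 2q` and `p' ≥ 2q'`, there is a graph
homomorphism from `G_{p,q}` to `G_{p',q'}` if and only if `p/q ≤ p'/q'`. -/
theorem stmt0 (p q p' q' : ℕ) (hq : 0 < q) (hp : 2 * q ≤ p) (hq' : 0 < q') (hp' : 2 * q' ≤ p') :
    Nonempty (circClique p q →g circClique p' q') ↔ (p : ℚ) / q ≤ (p' : ℚ) / q' := by
  have hq0 : (0:ℚ) < (q:ℚ) := by exact_mod_cast hq
  have hq'0 : (0:ℚ) < (q':ℚ) := by exact_mod_cast hq'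
  rw [div_le_div_iff₀ hq0 hq'0]
  constructor
  · rintro ⟨f⟩
    have hq'p' : q' ≤ p' := by omega
    have hp0 : 0 < p' := by omega
    have key : p * q' ≤ p' * q := by
      by_contra hcon
      push_neg at hcon
      have hsum : ∑ t ∈ Finset.range p',
          (Finset.univ.filter fun v : Fin p => ((f v).val + p' - t) % p' < q').card
            = p * q' := by
        calc ∑ t ∈ Finset.range p',
              (Finset.univ.filter fun v : Fin p => ((f v).val + p' - t) % p' < q').card
            = ∑ t ∈ Finset.range p', ∑ v : Fin p,
                (if ((f v).val + p' - t) % p' < q' then 1 else 0) := by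
              refine Finset.sum_congr rfl fun t _ => ?_
              rw [Finset.card_filter]
          _ = ∑ v : Fin p, ∑ t ∈ Finset.range p',
                (if ((f v).val + p' - t) % p' < q' then 1 else 0) := Finset.sum_comm
          _ = ∑ _v : Fin p, q' := by
              refine Finset.sum_congr rfl fun v _ => ?_
              rw [← Finset.card_filter]
              exact count_lemma hq'p' _ (f v).isLt
          _ = p * q' := by simp [mul_comm]
      have hbound : ∀ t ∈ Finset.range p',
          (Finset.univ.filter fun v : Fin p => ((f v).val + p' - t) % p' < q').card ≤ q := by
        intro t ht
        rw [Finset.mem_range] at ht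
        apply stable_card_le hq hp
        intro v hv w hw hadj
        rw [Finset.mem_filter] at hv hw
        have hadj' := f.map_adj hadj
        rw [circ_adj_iff] at hadj'
        have hy := (f v).isLt
        have hz := (f w).isLt
        have hyc := hv.2
        have hzc := hw.2
        have hdy := Nat.div_add_mod ((f v).val + p' - t) p'
        have hdz := Nat.div_add_mod ((f w).val + p' - t) p'
        obtain ⟨ky, hky⟩ : ∃ k, ((f v).val + p' - t) / p' = k := ⟨_, rfl⟩
        obtain ⟨kz, hkz⟩ : ∃ k, ((f w).val + p' - t) / p' = k := ⟨_, rfl⟩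
        rw [hky] at hdy
        rw [hkz] at hdz
        have hky2 : ky < 2 := by rw [← hky, Nat.div_lt_iff_lt_mul hp0]; omega
        have hkz2 : kz < 2 := by rw [← hkz, Nat.div_lt_iff_lt_mul hp0]; omega
        rcases (by omega : ky = 0 ∨ ky = 1) with rfl | rfl <;>
          rcases (by omega : kz = 0 ∨ kz = 1) with rfl | rfl <;> omega
      have htotal : ∑ t ∈ Finset.range p',
          (Finset.univ.filter fun v : Fin p => ((f v).val + p' - t) % p' < q').card
            ≤ p' * q := by
        calc ∑ t ∈ Finset.range p',
              (Finset.univ.filter fun v : Fin p => ((f v).val + p' - t) % p' < q').card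
            ≤ ∑ _t ∈ Finset.range p', q := Finset.sum_le_sum hbound
          _ = p' * q := by simp [mul_comm]
      omega
    exact_mod_cast key
  · intro h
    have hkey : p * q' ≤ p' * q := by exact_mod_cast h
    have hbound : ∀ i : Fin p, i.val * q' / q < p' := by
      intro i
      have h3 : i.val + 1 ≤ p := i.isLt
      have h2 : i.val * q' + q' ≤ p * q' := by
        calc i.val * q' + q' = (i.val + 1) * q' := (Nat.succ_mul _ _).symm
          _ ≤ p * q' := mul_le_mul_left h3 q'
      rw [Nat.div_lt_iff_lt_mul hq]
      omega
    refine ⟨⟨fun i => ⟨i.val * q' / q, hbound i⟩, ?_⟩⟩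
    intro a b hadj
    rw [circ_adj_iff] at hadj ⊢
    obtain ⟨hne, hd⟩ := hadj
    rcases hd with ⟨h1, h2⟩ | ⟨h1, h2⟩
    · have hab : a.val ≤ b.val := by omega
      obtain ⟨hA, hB⟩ := step_lemma hq hkey a.val b.val hab h1 h2
      refine ⟨by simpa using (by omega : a.val * q' / q ≠ b.val * q' / q), Or.inl ⟨?_, ?_⟩⟩
      · simp only [Fin.val_mk]; omega
      · simp only [Fin.val_mk]; omega
    · have hab : b.val ≤ a.val := by omega
      obtain ⟨hA, hB⟩ := step_lemma hq hkey b.val a.val hab h1 h2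
      refine ⟨by simpa using (by omega : a.val * q' / q ≠ b.val * q' / q), Or.inr ⟨?_, ?_⟩⟩
      · simp only [Fin.val_mk]; omega
      · simp only [Fin.val_mk]; omega
end

section
/- Let 2 ≤ p/q < 4 and let f, g be (p,q)-colourings of a graph G such that g is obtained from f by adding α mod p to the colour of every vertex in a set X ⊆ V(G) (and g is a proper (p,q)-colouring). Then there is a sequence of (p,q)-colourings f = f_0, f_1, ..., f_α = g where each f_{i+1} is obtained from f_i by adding 1 (mod p) to every vertex of X, or each is obtained by subtracting 1 (mod p) from every vertex of X. -/
/-!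
Only the edges between `X` and its complement feel the shift, and on such an edge
`uv` (with `u ∈ X`) the difference `d = f u - f v` moves to `d + α`. Reading `d` as a
residue in `[q, p - q]`, adding `α` either stays below `p` or wraps past it. Without
wrapping, `d + i` stays in `[q, p - q]` for every `i ≤ α`; with wrapping,
`d - j` stays there for every `j ≤ p - α`. A non-wrapping edge forces `α ≤ p - 2q`
and a wrapping one forces `α ≥ 2q`, so when `p < 4q` all cross edges behave alike.
-/

/-- A `(p,q)`-colouring of `G` with colours in `ℤ/pℤ`: for every edge `uv` the
difference `f(u) - f(v)` lies (as a residue) in `[q, p-q]`, i.e. the circular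
distance between the colours is at least `q`. -/
def IsZCol {V : Type*} (G : SimpleGraph V) (p q : ℕ) (f : V → ZMod p) : Prop :=
  ∀ ⦃u v : V⦄, G.Adj u v → q ≤ (f u - f v).val ∧ (f u - f v).val ≤ p - q

namespace ZMod

variable {p q : ℕ}

def IsCircFar (q : ℕ) (c : ZMod p) : Prop :=
  q ≤ c.val ∧ c.val ≤ p - q

section Val

variable {c : ZMod p} {a : ℕ}

theorem val_add_natCast_of_lt (h : c.val + a < p) : (c + (a : ZMod p)).val = c.val + a := by
  have hval : (a : ZMod p).val = a := val_natCast_of_lt (by omega)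
  rw [val_add_of_lt (by omega), hval]

theorem val_add_natCast_of_le [NeZero p] (hap : a < p) (h : p ≤ c.val + a) :
    (c + (a : ZMod p)).val = c.val + a - p := by
  have hval : (a : ZMod p).val = a := val_natCast_of_lt hap
  rw [val_add_of_le (by omega), hval]

theorem val_sub_natCast_of_le [NeZero p] (h : a ≤ c.val) : (c - (a : ZMod p)).val = c.val - a := by
  have hval : (a : ZMod p).val = a := val_natCast_of_lt (by have := c.val_lt; omega)
  rw [val_sub (by omega), hval]

end Val

namespace IsCircFar

variable {c d : ZMod p} {a i : ℕ}

theorem add_natCast_of_lt (hc : IsCircFar q c) (hca : IsCircFar q (c + (a : ZMod p)))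
    (hno_wrap : c.val + a < p) (hi : i ≤ a) : IsCircFar q (c + (i : ZMod p)) := by
  unfold IsCircFar at *
  rw [val_add_natCast_of_lt hno_wrap] at hca
  rw [val_add_natCast_of_lt (by omega)]
  omega

variable [NeZero p]

theorem neg (hc : IsCircFar q c) : IsCircFar q (-c) := by
  have := c.val_lt
  unfold IsCircFar at *
  rw [neg_val]
  split_ifs with h0
  · simp_all
  · omega

theorem sub_natCast_of_le (hc : IsCircFar q c) (hca : IsCircFar q (c + (a : ZMod p)))
    (hap : a < p) (hwrap : p ≤ c.val + a) (hi : i ≤ p - a) :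
    IsCircFar q (c - (i : ZMod p)) := by
  unfold IsCircFar at *
  rw [val_add_natCast_of_le hap hwrap] at hca
  rw [val_sub_natCast_of_le (by omega)]
  omega

theorem le_val_add_of_le_val_add (h4 : p < 4 * q) (hap : a < p)
    (hc : IsCircFar q c) (hca : IsCircFar q (c + (a : ZMod p)))
    (hd : IsCircFar q d) (hda : IsCircFar q (d + (a : ZMod p))) (hwrap : p ≤ d.val + a) :
    p ≤ c.val + a := by
  by_contra hc_wrap
  unfold IsCircFar at *
  rw [val_add_natCast_of_le hap hwrap] at hda
  rw [val_add_natCast_of_lt (by omega)] at hca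
  omega

end IsCircFar

end ZMod

open ZMod

section Shift

variable {V : Type*} {G : SimpleGraph V} {p q : ℕ} [NeZero p] {f : V → ZMod p}
  {X : Set V} [DecidablePred (· ∈ X)]

theorem isZCol_ite_add_iff (hf : IsZCol G p q f) (t : ZMod p) :
    IsZCol G p q (fun v => if v ∈ X then f v + t else f v) ↔
      ∀ ⦃u v⦄, G.Adj u v → u ∈ X → v ∉ X → IsCircFar q (f u - f v + t) := by
  constructor
  · intro hg u v huv hu hv
    have := hg huv
    simp only [hu, hv, if_true, if_false] at this
    rwa [add_sub_right_comm] at this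
  · intro hcross u v huv
    by_cases hu : u ∈ X <;> by_cases hv : v ∈ X <;> simp only [hu, hv, if_true, if_false]
    · rw [add_sub_add_right_eq_sub]
      exact hf huv
    · rw [add_sub_right_comm]
      exact hcross huv hu hv
    · have := (hcross huv.symm hv hu).neg
      rwa [neg_add', neg_sub, sub_sub] at this
    · exact hf huv

end Shift

theorem stmt7_general {V : Type*} (G : SimpleGraph V) (p q : ℕ)
    (h4 : p < 4 * q)
    (f : V → ZMod p) (X : Set V) [DecidablePred (· ∈ X)]
    (α : ℕ) (hαp : α < p)
    (hf : IsZCol G p q f)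
    (hg : IsZCol G p q (fun v => if v ∈ X then f v + (α : ZMod p) else f v)) :
    (∀ i : ℕ, i ≤ α → IsZCol G p q (fun v => if v ∈ X then f v + (i : ZMod p) else f v)) ∨
    (∀ i : ℕ, i ≤ p - α →
      IsZCol G p q (fun v => if v ∈ X then f v - (i : ZMod p) else f v)) := by
  have : NeZero p := ⟨by omega⟩
  rw [isZCol_ite_add_iff hf] at hg
  by_cases hwrap : ∃ u v, G.Adj u v ∧ u ∈ X ∧ v ∉ X ∧ p ≤ (f u - f v).val + α
  · obtain ⟨u₀, v₀, huv₀, hu₀, hv₀, hwrap₀⟩ := hwrap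
    right
    intro i hi
    simp only [sub_eq_add_neg]
    rw [isZCol_ite_add_iff hf]
    intro u v huv hu hv
    have hwrap_uv := IsCircFar.le_val_add_of_le_val_add h4 hαp (hf huv) (hg huv hu hv) (hf huv₀)
      (hg huv₀ hu₀ hv₀) hwrap₀
    rw [← sub_eq_add_neg]
    exact IsCircFar.sub_natCast_of_le (hf huv) (hg huv hu hv) hαp hwrap_uv hi
  · push Not at hwrap
    left
    intro i hi
    rw [isZCol_ite_add_iff hf]
    intro u v huv hu hv
    exact IsCircFar.add_natCast_of_lt (hf huv) (hg huv hu hv) (hwrap u v huv hu hv) hi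

/-- For `2 ≤ p/q < 4`: if `g` is a proper `(p,q)`-colouring obtained from a
`(p,q)`-colouring `f` by adding `α (mod p)` to every vertex of `X`, then either every
intermediate colouring obtained by adding `i (mod p)` (`0 ≤ i ≤ α`) on `X` is proper,
or every intermediate colouring obtained by subtracting `i (mod p)` (`0 ≤ i ≤ p-α`)
on `X` is proper. -/
theorem stmt7 {V : Type*} (G : SimpleGraph V) (p q : ℕ)
    (hq : 0 < q) (h2 : 2 * q ≤ p) (h4 : p < 4 * q)
    (f : V → ZMod p) (X : Set V) [DecidablePred (· ∈ X)]
    (α : ℕ) (hα : 0 < α) (hαp : α < p)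
    (hf : IsZCol G p q f)
    (hg : IsZCol G p q (fun v => if v ∈ X then f v + (α : ZMod p) else f v)) :
    (∀ i : ℕ, i ≤ α → IsZCol G p q (fun v => if v ∈ X then f v + (i : ZMod p) else f v)) ∨
    (∀ i : ℕ, i ≤ p - α →
      IsZCol G p q (fun v => if v ∈ X then f v - (i : ZMod p) else f v)) :=
  stmt7_general G p q h4 f X α hαp hf hg
end

section
/- For positive integers p, q with 2 ≤ p/q < 4, any two vertices of the circular clique G_{p,q} have a common neighbourhood that is a (possibly empty) cyclic interval of {0,...,p-1}. -/
open Fin.NatCast Fin.CommRing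

lemma fin_sub_val {p : ℕ} [NeZero p] (x u : Fin p) :
    (x - u).val = (x.val + (p - u.val)) % p := by
  rw [Fin.sub_def]; simp [Nat.add_comm]

lemma modcase (A p : ℕ) (h : A < 2 * p) :
    A % p = A ∧ A < p ∨ A % p = A - p ∧ p ≤ A := by
  rcases Nat.lt_or_ge A p with h1 | h1
  · exact Or.inl ⟨Nat.mod_eq_of_lt h1, h1⟩
  · exact Or.inr ⟨by rw [Nat.mod_eq_sub_mod h1]; exact Nat.mod_eq_of_lt (by omega), h1⟩

lemma adj_iff {p q : ℕ} [NeZero p] (hq : 0 < q) (h2 : 2 * q ≤ p) (u x : Fin p) :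
    (circClique p q).Adj u x ↔ q ≤ (x - u).val ∧ (x - u).val ≤ p - q := by
  have hx := x.isLt; have hu := u.isLt
  have hsub := fin_sub_val x u
  have hval : (x - u).val = if u.val ≤ x.val then x.val - u.val else x.val + p - u.val := by
    rw [hsub]; split_ifs with h
    · rw [show x.val + (p - u.val) = p + (x.val - u.val) by omega, Nat.add_mod_left]
      exact Nat.mod_eq_of_lt (by omega)
    · rw [Nat.mod_eq_of_lt (by omega)]; omega
  have hne : u ≠ x ↔ u.val ≠ x.val := by rw [Ne, Fin.ext_iff]
  show (u ≠ x ∧ _ ∧ _) ↔ _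
  rw [hne]
  rcases le_or_gt u.val x.val with h | h
  · rw [Nat.max_eq_right h, Nat.min_eq_left h, if_pos h] at *
    omega
  · rw [Nat.max_eq_left h.le, Nat.min_eq_right h.le, if_neg (by omega)] at *
    omega

lemma mem_interval {p : ℕ} [NeZero p] (a x : Fin p) (n : ℕ) (hn : n ≤ p) :
    (∃ i < n, x = a + Fin.ofNat p i) ↔ (x - a).val < n := by
  simp only [Fin.ofNat_eq_cast]
  constructor
  · rintro ⟨i, hi, rfl⟩
    rw [add_sub_cancel_left, Fin.val_cast_of_lt (lt_of_lt_of_le hi hn)]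
    exact hi
  · intro h
    exact ⟨(x - a).val, h, by rw [Fin.cast_val_eq_self, add_sub_cancel]⟩


/-- For `2 ≤ p/q < 4`, the common neighbourhood of any two vertices of the circular
clique `G_{p,q}` is a (possibly empty) cyclic interval `{a, a+1, ..., a+(n-1)}` of
`{0,...,p-1}` (addition mod `p`). -/
theorem stmt8 (p q : ℕ) [NeZero p] (hq : 0 < q) (h2 : 2 * q ≤ p) (h4 : p < 4 * q)
    (u v : Fin p) :
    ∃ (a : Fin p) (n : ℕ),
      {x : Fin p | (circClique p q).Adj u x ∧ (circClique p q).Adj v x} =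
        {x : Fin p | ∃ i < n, x = a + Fin.ofNat p i} := by
  set s := (v - u).val with hs_def
  have hs : s < p := (v - u).isLt
  have key : ∀ x : Fin p, (x - v).val = ((x - u).val + (p - s)) % p := by
    intro x
    rw [show x - v = (x - u) - (v - u) by ring, fin_sub_val]
  rcases le_or_gt (s + 2 * q) p with hc1 | hc1
  · -- a = u + (s+q), n = p - s - 2q + 1
    refine ⟨u + ((s + q : ℕ) : Fin p), p - s - 2 * q + 1, Set.ext fun x => ?_⟩
    have hm : (x - (u + ((s + q : ℕ) : Fin p))).val = ((x - u).val + (p - (s + q))) % p := by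
      rw [show x - (u + ((s + q : ℕ) : Fin p)) = (x - u) - ((s + q : ℕ) : Fin p) by ring,
        fin_sub_val, Fin.val_cast_of_lt (by omega)]
    simp only [Set.mem_setOf_eq]
    rw [adj_iff hq h2 u x, adj_iff hq h2 v x, mem_interval _ _ _ (by omega), key x, hm]
    have ht := (x - u).isLt
    rcases modcase ((x - u).val + (p - s)) p (by omega) with ⟨e1, f1⟩ | ⟨e1, f1⟩ <;>
      rcases modcase ((x - u).val + (p - (s + q))) p (by omega) with ⟨e2, f2⟩ | ⟨e2, f2⟩ <;>
      rw [e1, e2] <;> omega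
  · rcases le_or_gt (2 * q) s with hc2 | hc2
    · -- a = u + q, n = s - 2q + 1
      refine ⟨u + ((q : ℕ) : Fin p), s - 2 * q + 1, Set.ext fun x => ?_⟩
      have hm : (x - (u + ((q : ℕ) : Fin p))).val = ((x - u).val + (p - q)) % p := by
        rw [show x - (u + ((q : ℕ) : Fin p)) = (x - u) - ((q : ℕ) : Fin p) by ring,
          fin_sub_val, Fin.val_cast_of_lt (by omega)]
      simp only [Set.mem_setOf_eq]
      rw [adj_iff hq h2 u x, adj_iff hq h2 v x, mem_interval _ _ _ (by omega), key x, hm]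
      have ht := (x - u).isLt
      rcases modcase ((x - u).val + (p - s)) p (by omega) with ⟨e1, f1⟩ | ⟨e1, f1⟩ <;>
        rcases modcase ((x - u).val + (p - q)) p (by omega) with ⟨e2, f2⟩ | ⟨e2, f2⟩ <;>
        rw [e1, e2] <;> omega
    · -- empty
      refine ⟨u, 0, Set.ext fun x => ?_⟩
      simp only [Set.mem_setOf_eq, Nat.not_lt_zero, false_and, exists_false,
        exists_prop, iff_false]
      rw [adj_iff hq h2 u x, adj_iff hq h2 v x, key x]
      have ht := (x - u).isLt
      rcases modcase ((x - u).val + (p - s)) p (by omega) with ⟨e1, f1⟩ | ⟨e1, f1⟩ <;>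
        rw [e1] <;> omega
end

section
/- Let f be a (p,q)-colouring of a graph G and f' be obtained from f by adding 1 (mod p) to the colour of every vertex of a set X, with f' also a proper (p,q)-colouring. Let D_f be the digraph on V(G) with an arc from u to v whenever uv ∈ E(G) and f(v) - f(u) ≡ q (mod p). Then f' can be obtained from f by a sequence of proper (p,q)-colourings each changing the colour of a single vertex of X (each vertex changed exactly once, increasing its colour by 1 mod p) if and only if the induced subdigraph D_f[X] contains no directed cycle. -/
/-!
Raising the colours of a set `S` by one keeps a `(p,q)`-colouring proper exactly when no arc
of `D_f` leaves `S`: such an arc `u → v` is the only kind of edge whose colour difference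
`q` drops to `q - 1`, while all other differences stay in `[q, p - q]`. Since `X` itself is
closed in this sense, a valid recolouring order of `X` is a list whose prefixes are all closed
under the arcs of `D_f[X]`, i.e. a reverse topological order of `D_f[X]`, and such an order
exists iff `D_f[X]` is acyclic.
-/

-- `IsZCol G p q f` unfolds to `CircDistGe p q (f u - f v)` on every edge `uv`.
def CircDistGe (p q : ℕ) (x : ZMod p) : Prop :=
  q ≤ x.val ∧ x.val ≤ p - q

namespace CircDistGe

variable {p q : ℕ} {x : ZMod p}

theorem neg_iff : CircDistGe p q (-x) ↔ CircDistGe p q x := by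
  rcases eq_zero_or_neZero p with rfl | _
  · simp only [CircDistGe, ZMod.val_neg']
  · unfold CircDistGe
    rw [ZMod.neg_val]
    split_ifs with hx
    · simp [hx]
    · have := x.val_lt
      omega

theorem one_lt (hq : 0 < q) (hx : CircDistGe p q x) : 1 < p := by
  obtain ⟨h1, h2⟩ := hx
  omega

theorem sub_one_iff (hq : 0 < q) (hx : CircDistGe p q x) :
    CircDistGe p q (x - 1) ↔ x ≠ q := by
  have := Fact.mk (hx.one_lt hq)
  obtain ⟨h1, h2⟩ := hx
  have hval : (x - 1).val = x.val - 1 := by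
    rw [ZMod.val_sub (by rw [ZMod.val_one]; omega), ZMod.val_one]
  rw [CircDistGe, hval, Ne, ← (ZMod.val_injective p).eq_iff, ZMod.val_cast_of_lt (by omega)]
  omega

theorem add_one_iff (hq : 0 < q) (hx : CircDistGe p q x) :
    CircDistGe p q (x + 1) ↔ x ≠ -q := by
  rw [← neg_iff, neg_add', sub_one_iff hq (neg_iff.2 hx), Ne, neg_eq_iff_eq_neg]

end CircDistGe

theorem IsZCol.shift_iff {V : Type*} {G : SimpleGraph V} {p q : ℕ} {f : V → ZMod p}
    (hq : 0 < q) (hf : IsZCol G p q f) (S : V → Prop) [DecidablePred S] :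
    IsZCol G p q (fun v => if S v then f v + 1 else f v) ↔
      ∀ ⦃a b⦄, G.Adj a b → f b - f a = q → S a → S b := by
  have out_iff : ∀ ⦃u v⦄, G.Adj u v →
      (CircDistGe p q (f u + 1 - f v) ↔ f v - f u ≠ q) := fun u v huv => by
    rw [add_sub_right_comm, CircDistGe.add_one_iff hq (hf huv), ← neg_sub, Ne, neg_inj]
  have in_iff : ∀ ⦃u v⦄, G.Adj u v →
      (CircDistGe p q (f u - (f v + 1)) ↔ f u - f v ≠ q) := fun u v huv => by
    rw [← sub_sub, CircDistGe.sub_one_iff hq (hf huv)]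
  constructor
  · intro hshift a b hab harc ha
    by_contra hb
    have := hshift hab
    simp only [ha, hb, if_true, if_false] at this
    exact (out_iff hab).1 this harc
  · intro hcl u v huv
    by_cases hu : S u <;> by_cases hv : S v <;> simp only [hu, hv, if_true, if_false]
    · rw [add_sub_add_right_eq_sub]
      exact hf huv
    · exact (out_iff huv).2 fun harc => hv (hcl huv harc hu)
    · exact (in_iff huv).2 fun harc => hu (hcl huv.symm harc hv)
    · exact hf huv

section PrefixClosed

variable {V : Type*} {r : V → V → Prop}

theorem Finset.exists_sink (hacyc : ∀ v, ¬ Relation.TransGen r v v) {X : Finset V}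
    (hX : X.Nonempty) : ∃ m ∈ X, ∀ b ∈ X, ¬ r m b := by
  obtain ⟨x, hx⟩ := hX
  let succ : X → X → Prop := fun a b => Relation.TransGen r b.1 a.1
  have : IsTrans X succ := ⟨fun _ _ _ hab hbc => hbc.trans hab⟩
  have : Std.Irrefl succ := ⟨fun a => hacyc a.1⟩
  obtain ⟨m, -, hmin⟩ :=
    (Finite.wellFounded_of_trans_of_irrefl succ).has_min Set.univ ⟨⟨x, hx⟩, trivial⟩
  exact ⟨m.1, m.2, fun b hb hmb => hmin ⟨b, hb⟩ trivial (.single hmb)⟩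

variable [DecidableEq V]

theorem List.idxOf_lt_of_take_closed {l : List V} (hirr : ∀ a, ¬ r a a)
    (hcl : ∀ n ≤ l.length, ∀ ⦃a b⦄, r a b → a ∈ l.take n → b ∈ l.take n)
    {a b : V} (hab : r a b) (ha : a ∈ l) : b ∈ l ∧ l.idxOf b < l.idxOf a := by
  have hb : b ∈ l.take (l.idxOf a + 1) :=
    hcl _ (List.idxOf_lt_length_iff.2 ha) hab ((List.mem_take_iff_idxOf_lt ha).2 (by omega))
  have hbl : b ∈ l := List.mem_of_mem_take hb
  have hne : l.idxOf b ≠ l.idxOf a := fun h =>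
    hirr a (((List.idxOf_inj hbl).1 h) ▸ hab)
  have := (List.mem_take_iff_idxOf_lt hbl).1 hb
  exact ⟨hbl, by omega⟩

theorem List.not_transGen_self_of_take_closed {l : List V} (hirr : ∀ a, ¬ r a a)
    (hcl : ∀ n ≤ l.length, ∀ ⦃a b⦄, r a b → a ∈ l.take n → b ∈ l.take n)
    {v : V} (hv : v ∈ l) : ¬ Relation.TransGen r v v := by
  have descends : ∀ {b}, Relation.TransGen r v b → b ∈ l ∧ l.idxOf b < l.idxOf v := by
    intro b h
    induction h with
    | single hab => exact idxOf_lt_of_take_closed hirr hcl hab hv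
    | tail _ hcb ih =>
      obtain ⟨hc, hcv⟩ := ih
      obtain ⟨hb, hbc⟩ := idxOf_lt_of_take_closed hirr hcl hcb hc
      exact ⟨hb, hbc.trans hcv⟩
  exact fun h => (descends h).2.false

theorem Finset.exists_list_take_closed (hacyc : ∀ v, ¬ Relation.TransGen r v v)
    (X : Finset V) : ∃ l : List V, l.Nodup ∧ (∀ v, v ∈ l ↔ v ∈ X) ∧
      ∀ n ⦃a b⦄, r a b → b ∈ X → a ∈ l.take n → b ∈ l.take n := by
  induction X using Finset.strongInductionOn with
  | _ X ih =>
  rcases X.eq_empty_or_nonempty with rfl | hX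
  · exact ⟨[], List.nodup_nil, by simp, by simp⟩
  obtain ⟨m, hm, hsink⟩ := X.exists_sink hacyc hX
  obtain ⟨l, hnd, hmem, hcl⟩ := ih (X.erase m) (Finset.erase_ssubset hm)
  refine ⟨m :: l, List.nodup_cons.2 ⟨fun h => by simpa using (hmem m).1 h, hnd⟩, ?_, ?_⟩
  · intro v
    rw [List.mem_cons, hmem, Finset.mem_erase]
    grind
  · rintro (_ | n) a b hab hb ha
    · simp at ha
    rw [List.take_succ_cons, List.mem_cons] at ha ⊢
    rcases ha with rfl | ha
    · exact absurd hab (hsink b hb)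
    by_cases hbm : b = m
    · exact .inl hbm
    · exact .inr (hcl n hab (Finset.mem_erase.2 ⟨hbm, hb⟩) ha)

end PrefixClosed

theorem stmt9_general {V : Type*} [DecidableEq V] (G : SimpleGraph V) (p q : ℕ)
    (hq : 0 < q)
    (f : V → ZMod p) (X : Finset V)
    (hf : IsZCol G p q f)
    (hf' : IsZCol G p q (fun v => if v ∈ X then f v + 1 else f v)) :
    (∃ l : List V, l.Nodup ∧ (∀ v : V, v ∈ l ↔ v ∈ X) ∧
        ∀ n ≤ l.length,
          IsZCol G p q (fun v => if v ∈ l.take n then f v + 1 else f v)) ↔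
      ¬ ∃ v ∈ X, Relation.TransGen
          (fun a b => a ∈ X ∧ b ∈ X ∧ G.Adj a b ∧ f b - f a = (q : ZMod p)) v v := by
  set r : V → V → Prop := fun a b => a ∈ X ∧ b ∈ X ∧ G.Adj a b ∧ f b - f a = (q : ZMod p)
  have hX_closed : ∀ ⦃a b⦄, G.Adj a b → f b - f a = q → a ∈ X → b ∈ X :=
    (hf.shift_iff hq (· ∈ X)).1 hf'
  have shift_prefix_iff : ∀ l : List V, (∀ v ∈ l, v ∈ X) → ∀ n,
      IsZCol G p q (fun v => if v ∈ l.take n then f v + 1 else f v) ↔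
        ∀ ⦃a b⦄, r a b → a ∈ l.take n → b ∈ l.take n := fun l hl n => by
    rw [hf.shift_iff hq (· ∈ l.take n)]
    refine ⟨fun h a b hab => h hab.2.2.1 hab.2.2.2, fun h a b hab harc ha => h ?_ ha⟩
    have haX := hl a (List.mem_of_mem_take ha)
    exact ⟨haX, hX_closed hab harc haX, hab, harc⟩
  have hirr : ∀ a, ¬ r a a := fun a h => h.2.2.1.ne rfl
  constructor
  · rintro ⟨l, -, hmem, hcol⟩ ⟨v, hv, hcyc⟩
    exact List.not_transGen_self_of_take_closed hirr
      (fun n hn => (shift_prefix_iff l (fun v => (hmem v).1) n).1 (hcol n hn))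
      ((hmem v).2 hv) hcyc
  · intro hno_cycle
    have hacyc : ∀ v, ¬ Relation.TransGen r v v := fun v h =>
      hno_cycle ⟨v, (Relation.TransGen.head'_iff.1 h).elim fun _ h => h.1.1, h⟩
    obtain ⟨l, hnd, hmem, hcl⟩ := X.exists_list_take_closed hacyc
    exact ⟨l, hnd, hmem, fun n _ => (shift_prefix_iff l (fun v => (hmem v).1) n).2
      fun a b hab => hcl n hab hab.2.1⟩

/-- Let `f'` be obtained from the `(p,q)`-colouring `f` by adding `1 (mod p)` on a set
`X`, with `f'` also proper.  Then `f'` can be reached from `f` by recolouring the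
vertices of `X` one at a time (each exactly once, by `+1 mod p`), with all intermediate
colourings proper, if and only if the subdigraph of `D_f` induced on `X` (arcs `u → v`
with `uv ∈ E(G)` and `f(v) - f(u) ≡ q`) has no directed cycle. -/
theorem stmt9 {V : Type*} [DecidableEq V] (G : SimpleGraph V) (p q : ℕ)
    (hq : 0 < q) (h2 : 2 * q ≤ p)
    (f : V → ZMod p) (X : Finset V)
    (hf : IsZCol G p q f)
    (hf' : IsZCol G p q (fun v => if v ∈ X then f v + 1 else f v)) :
    (∃ l : List V, l.Nodup ∧ (∀ v : V, v ∈ l ↔ v ∈ X) ∧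
        ∀ n ≤ l.length,
          IsZCol G p q (fun v => if v ∈ l.take n then f v + 1 else f v)) ↔
      ¬ ∃ v ∈ X, Relation.TransGen
          (fun a b => a ∈ X ∧ b ∈ X ∧ G.Adj a b ∧ f b - f a = (q : ZMod p)) v v :=
  stmt9_general G p q hq f X hf hf'
end

section
/- Let 2 ≤ p/q < 4 and f be a (p,q)-colouring of a graph G. If a vertex v lies on a directed cycle of the digraph D_f (arcs uv of G with f(v)-f(u) ≡ q mod p), then in every sequence of (p,q)-colourings starting from f in which consecutive colourings differ on a single vertex, the colour of v never changes. -/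
/-!
Let `D` be the digraph of tight arcs `u → w` (`f w - f u = q`). If `w` lies on a directed cycle
of `D`, it has an in-neighbour `u` and an out-neighbour `x` on that cycle, so
`f x - f u = 2q`. As long as `u` and `x` keep their colours, the colour `c` of `w` satisfies
`c - f u = a`, `f x - c = b` with `a, b ∈ [q, p - q]` and `a + b ≡ 2q`; since `p < 4q`, the
only such pair is `a = b = q`, so `c = f w`. Since each step recolours a single vertex, whose
cycle neighbours are then still coloured as in `f`, induction along the sequence shows that no
vertex on a directed cycle ever changes colour.
-/

theorem ZMod.eq_of_add_eq_two_mul {p q : ℕ} (h4 : p < 4 * q) {a b : ZMod p}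
    (ha : q ≤ a.val ∧ a.val ≤ p - q) (hb : q ≤ b.val ∧ b.val ≤ p - q)
    (hab : a + b = (2 * q : ℕ)) : a = q := by
  have : NeZero p := ⟨by omega⟩
  have hmod : (a.val + b.val) % p = 2 * q % p := by
    rw [← ZMod.val_add, hab, ZMod.val_natCast]
  have hdvd : (a.val + b.val - 2 * q) % p = 0 := Nat.sub_mod_eq_zero_of_mod_eq hmod
  rw [Nat.mod_eq_of_lt (by omega)] at hdvd
  have hval : a.val = q := by omega
  rw [← ZMod.natCast_zmod_val a, hval]

theorem Relation.TransGen.exists_pred_of_self {α : Type*} {r : α → α → Prop} {a : α}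
    (h : Relation.TransGen r a a) : ∃ b, r b a ∧ Relation.TransGen r b b := by
  obtain ⟨b, hab, hba⟩ := Relation.TransGen.tail'_iff.mp h
  exact ⟨b, hba, .head' hba hab⟩

theorem Relation.TransGen.exists_succ_of_self {α : Type*} {r : α → α → Prop} {a : α}
    (h : Relation.TransGen r a a) : ∃ b, r a b ∧ Relation.TransGen r b b := by
  obtain ⟨b, hab, hba⟩ := Relation.TransGen.head'_iff.mp h
  exact ⟨b, hab, .tail' hba hab⟩

section Colouring

variable {V : Type*} {G : SimpleGraph V} {p q : ℕ}

theorem IsZCol.apply_eq_of_tight_path {f g : V → ZMod p} (hg : IsZCol G p q g) (h4 : p < 4 * q)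
    {u w x : V} (huw : G.Adj u w) (hwx : G.Adj w x) (hfuw : f w - f u = q)
    (hfwx : f x - f w = q) (hu : g u = f u) (hx : g x = f x) : g w = f w := by
  have hsum : (g w - g u) + (g x - g w) = (2 * q : ℕ) := by
    rw [sub_add_sub_cancel', hu, hx, ← sub_add_sub_cancel (f x) (f w), hfwx, hfuw]
    push_cast
    ring
  have htight := ZMod.eq_of_add_eq_two_mul h4 (hg huw.symm) (hg hwx.symm) hsum
  rw [← hfuw, hu] at htight
  exact sub_left_inj.mp htight

def AgreesOnTightCycles (G : SimpleGraph V) (q : ℕ) (f g : V → ZMod p) : Prop :=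
  ∀ w, Relation.TransGen (fun a b => G.Adj a b ∧ f b - f a = (q : ZMod p)) w w → g w = f w

theorem AgreesOnTightCycles.of_eq_off {f g g' : V → ZMod p} (h4 : p < 4 * q)
    (hg : AgreesOnTightCycles G q f g) (hg' : IsZCol G p q g')
    {w₀ : V} (hoff : ∀ x, x ≠ w₀ → g' x = g x) : AgreesOnTightCycles G q f g' := by
  intro w hw
  by_cases hww₀ : w = w₀
  · subst hww₀
    obtain ⟨u, ⟨huw, hfuw⟩, hu⟩ := hw.exists_pred_of_self
    obtain ⟨x, ⟨hwx, hfwx⟩, hx⟩ := hw.exists_succ_of_self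
    refine hg'.apply_eq_of_tight_path h4 huw hwx hfuw hfwx ?_ ?_
    · rw [hoff u huw.ne, hg u hu]
    · rw [hoff x hwx.ne.symm, hg x hx]
  · rw [hoff w hww₀, hg w hw]

end Colouring

theorem stmt10_general {V : Type*} (G : SimpleGraph V) (p q : ℕ)
    (h4 : p < 4 * q)
    (f : V → ZMod p) (v : V)
    (hv : Relation.TransGen (fun a b => G.Adj a b ∧ f b - f a = (q : ZMod p)) v v)
    (F : ℕ → V → ZMod p) (hF0 : F 0 = f)
    (hFcol : ∀ i : ℕ, IsZCol G p q (F i))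
    (hFstep : ∀ i : ℕ, ∃ w : V, ∀ x : V, x ≠ w → F (i + 1) x = F i x) :
    ∀ n : ℕ, F n v = f v := by
  have hagree : ∀ n, AgreesOnTightCycles G q f (F n) := by
    intro n
    induction n with
    | zero => exact fun w _ => by rw [hF0]
    | succ n ih =>
      obtain ⟨w₀, hoff⟩ := hFstep n
      exact ih.of_eq_off h4 (hFcol (n + 1)) hoff
  exact fun n => hagree n v hv

/-- For `2 ≤ p/q < 4`: if `v` lies on a directed cycle of `D_f` (arcs `u → v` with
`f(v) - f(u) ≡ q mod p`), then in every sequence of proper `(p,q)`-colourings starting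
at `f` in which consecutive colourings differ on (at most) a single vertex, the colour
of `v` never changes. -/
theorem stmt10 {V : Type*} (G : SimpleGraph V) (p q : ℕ)
    (hq : 0 < q) (h2 : 2 * q ≤ p) (h4 : p < 4 * q)
    (f : V → ZMod p) (hf : IsZCol G p q f) (v : V)
    (hv : Relation.TransGen (fun a b => G.Adj a b ∧ f b - f a = (q : ZMod p)) v v)
    (F : ℕ → V → ZMod p) (hF0 : F 0 = f)
    (hFcol : ∀ i : ℕ, IsZCol G p q (F i))
    (hFstep : ∀ i : ℕ, ∃ w : V, ∀ x : V, x ≠ w → F (i + 1) x = F i x) :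
    ∀ n : ℕ, F n v = f v :=
  stmt10_general G p q h4 f v hv F hF0 hFcol hFstep
end

section
/- Let 2 ≤ p/q < 4 and let f, g be (p,q)-colourings of a connected graph G. If f reconfigures to g (via single-vertex recolourings through proper (p,q)-colourings), then for every orientation of G and every cycle C, the weights satisfy φ_f(C) = φ_g(C). -/
/-- Weight of a walk under the edge-labelling induced by `f` on the oriented graph. -/
def zWt {V : Type*} {G : SimpleGraph V} {a b : V} (p : ℕ) (o : V → V → Bool)
    (f : V → ZMod p) (c : G.Walk a b) : ℕ :=
  (c.darts.map (fun d => if o d.toProd.1 d.toProd.2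
    then (f d.toProd.2 - f d.toProd.1).val
    else p - (f d.toProd.1 - f d.toProd.2).val)).sum

/-- One reconfiguration step. -/
def RecolStep {V : Type*} (G : SimpleGraph V) (p q : ℕ) (f g : V → ZMod p) : Prop :=
  IsZCol G p q g ∧ ∃ w : V, ∀ x : V, x ≠ w → g x = f x

section lemmas
variable {V : Type*} {G : SimpleGraph V} {p q : ℕ}

/-- mod-p telescoping -/
lemma zWt_cast (hp : 0 < p) (o : V → V → Bool) (f : V → ZMod p) {a b : V} (c : G.Walk a b) :
    ((zWt p o f c : ℕ) : ZMod p) = f b - f a := by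
  induction c with
  | nil => simp [zWt]
  | cons h c ih =>
    rename_i u v w
    simp only [zWt, SimpleGraph.Walk.darts_cons, List.map_cons, List.sum_cons, Nat.cast_add]
      at ih ⊢
    rw [ih]
    haveI : NeZero p := ⟨hp.ne'⟩
    have key : ((if o u v then (f v - f u).val
        else p - (f u - f v).val : ℕ) : ZMod p) = f v - f u := by
      split
      · rw [ZMod.natCast_val, ZMod.cast_id]
      · have hle : (f u - f v).val ≤ p := le_of_lt (ZMod.val_lt _)
        rw [Nat.cast_sub hle, ZMod.natCast_val, ZMod.cast_id, ZMod.natCast_self]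
        ring
    rw [key]; ring
end lemmas

section lemmas2
variable {V : Type*} {G : SimpleGraph V} {p q : ℕ}

/-- contribution of a dart lies in [q, p-q] -/
lemma contrib_bounds (hq : 0 < q) (h2 : 2 * q ≤ p) (o : V → V → Bool)
    {f : V → ZMod p} (hf : IsZCol G p q f) (d : G.Dart) :
    q ≤ (if o d.toProd.1 d.toProd.2 then (f d.toProd.2 - f d.toProd.1).val
      else p - (f d.toProd.1 - f d.toProd.2).val) ∧
    (if o d.toProd.1 d.toProd.2 then (f d.toProd.2 - f d.toProd.1).val
      else p - (f d.toProd.1 - f d.toProd.2).val) ≤ p - q := by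
  obtain ⟨h1, h1'⟩ := hf d.adj
  obtain ⟨h2', h2''⟩ := hf d.adj.symm
  split <;> omega

/-- a generic counting bound on list sums of integers -/
lemma sum_bound {α : Type*} (L : List α) (h : α → ℤ) (P Q : α → Bool) (B : ℤ) (hB : 0 ≤ B)
    (hzero : ∀ d ∈ L, ¬ P d → ¬ Q d → h d = 0)
    (hbd : ∀ d ∈ L, |h d| ≤ B) :
    |(L.map h).sum| ≤ B * (L.countP P + L.countP Q) := by
  induction L with
  | nil => simp
  | cons a L ih =>
    have ih' := ih (fun d hd => hzero d (List.mem_cons_of_mem _ hd))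
      (fun d hd => hbd d (List.mem_cons_of_mem _ hd))
    simp only [List.map_cons, List.sum_cons, List.countP_cons]
    have habs : |h a + (L.map h).sum| ≤ |h a| + |(L.map h).sum| := abs_add_le _ _
    have hone : |h a| ≤ B * (((if P a = true then 1 else 0) : ℤ)
        + ((if Q a = true then 1 else 0) : ℤ)) := by
      by_cases hP : P a = true <;> by_cases hQ : Q a = true <;>
        simp only [hP, hQ, Bool.false_eq_true, if_true, if_false]
      · nlinarith [hbd a List.mem_cons_self]
      · nlinarith [hbd a List.mem_cons_self]
      · nlinarith [hbd a List.mem_cons_self]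
      · rw [hzero a List.mem_cons_self hP hQ]; simp
    push_cast
    nlinarith [habs, hone, ih', abs_nonneg (h a)]
end lemmas2

section lemmas3
variable {V : Type*} {G : SimpleGraph V} {p q : ℕ}

lemma countP_eq_le_one {α : Type*} {l : List α} (hl : l.Nodup) (w : α)
    (P : α → Bool) (hP : ∀ x, P x = true ↔ x = w) :
    l.countP P ≤ 1 := by
  induction l with
  | nil => simp
  | cons a l ih =>
    rw [List.nodup_cons] at hl
    rw [List.countP_cons]
    by_cases ha : P a = true
    · have haw : a = w := (hP a).1 ha
      have : l.countP P = 0 := by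
        rw [List.countP_eq_zero]
        intro x hx hPx
        have hxa : x = a := ((hP x).1 hPx).trans haw.symm
        exact hl.1 (hxa ▸ hx)
      simp [this, ha]
    · simp only [ha, if_false, add_zero]
      exact ih hl.2

lemma cycle_dropLast_nodup {a : V} {c : G.Walk a a} (hc : c.IsCycle) :
    c.support.dropLast.Nodup := by
  have ht : c.support.tail.Nodup := hc.support_nodup
  have hne : c.support.tail ≠ [] := by
    intro h
    have h3 := hc.three_le_length
    have hlen := c.length_support
    rw [c.support_eq_cons, h] at hlen
    simp only [List.length_cons, List.length_nil] at hlen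
    omega
  have hlast : c.support.tail.getLast hne = a := by
    rw [List.getLast_tail, c.getLast_support]
  have hsplit : c.support.tail.dropLast ++ [a] = c.support.tail := by
    conv_rhs => rw [← List.dropLast_concat_getLast hne]
    rw [hlast]
  have hdl : c.support.dropLast = a :: c.support.tail.dropLast := by
    conv_lhs => rw [c.support_eq_cons]
    rw [List.dropLast_cons_of_ne_nil hne]
  rw [hdl, List.nodup_cons]
  rw [← hsplit, List.nodup_append] at ht
  refine ⟨?_, ht.1⟩
  intro hmem
  exact ht.2.2 a hmem a (by simp) rfl
end lemmas3

section step
variable {V : Type*} {G : SimpleGraph V} {p q : ℕ}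

lemma map_sub_sum {α : Type*} (L : List α) (f g : α → ℤ) :
    (L.map (fun d => f d - g d)).sum = (L.map f).sum - (L.map g).sum := by
  induction L with
  | nil => simp
  | cons a L ih => simp [ih]; ring

lemma zWt_dvd (hp : 0 < p) (o : V → V → Bool) (f : V → ZMod p) {a : V} (c : G.Walk a a) :
    (p : ℤ) ∣ (zWt p o f c : ℤ) := by
  have := zWt_cast (G := G) hp o f c
  rw [sub_self] at this
  exact_mod_cast (ZMod.natCast_eq_zero_iff _ _).1 this

lemma step_eq (hq : 0 < q) (h2 : 2 * q ≤ p) (h4 : p < 4 * q)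
    {f g : V → ZMod p} (hf : IsZCol G p q f) (hstep : RecolStep G p q f g)
    (o : V → V → Bool) {a : V} (c : G.Walk a a) (hc : c.IsCycle) :
    zWt p o f c = zWt p o g c := by
  classical
  obtain ⟨hg, w, hw⟩ := hstep
  have hp : 0 < p := by omega
  set cf : G.Dart → ℕ := fun d => if o d.toProd.1 d.toProd.2
    then (f d.toProd.2 - f d.toProd.1).val else p - (f d.toProd.1 - f d.toProd.2).val with hcf
  set cg : G.Dart → ℕ := fun d => if o d.toProd.1 d.toProd.2
    then (g d.toProd.2 - g d.toProd.1).val else p - (g d.toProd.1 - g d.toProd.2).val with hcg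
  have hdiff : ((zWt p o f c : ℤ) - (zWt p o g c : ℤ)) =
      (c.darts.map (fun d => (cf d : ℤ) - (cg d : ℤ))).sum := by
    rw [map_sub_sum]
    unfold zWt
    push_cast [← hcf, ← hcg]
    rw [List.map_map, List.map_map]
    rfl
  have hbound := sum_bound c.darts (fun d => (cf d : ℤ) - (cg d : ℤ))
    (fun d => decide (d.toProd.1 = w)) (fun d => decide (d.toProd.2 = w))
    ((p : ℤ) - 2 * q) (by push_cast; omega)
    (by
      intro d _ h1 h2
      simp only [decide_eq_true_eq] at h1 h2
      have e1 : g d.toProd.1 = f d.toProd.1 := hw _ h1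
      have e2 : g d.toProd.2 = f d.toProd.2 := hw _ h2
      simp only [hcf, hcg, e1, e2, sub_self])
    (by
      intro d _
      obtain ⟨b1, b2⟩ : q ≤ cf d ∧ cf d ≤ p - q := contrib_bounds hq h2 o hf d
      obtain ⟨b3, b4⟩ : q ≤ cg d ∧ cg d ≤ p - q := contrib_bounds hq h2 o hg d
      show |(cf d : ℤ) - cg d| ≤ (p : ℤ) - 2 * q
      rw [abs_le]
      constructor <;> push_cast <;> omega)
  have hcount1 : c.darts.countP (fun d => decide (d.toProd.1 = w)) ≤ 1 := by
    have : c.darts.countP (fun d => decide (d.toProd.1 = w)) =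
        (c.darts.map (·.fst)).countP (fun x => decide (x = w)) := by
      rw [List.countP_map]; rfl
    rw [this, c.map_fst_darts]
    exact countP_eq_le_one (cycle_dropLast_nodup hc) w _ (by simp)
  have hcount2 : c.darts.countP (fun d => decide (d.toProd.2 = w)) ≤ 1 := by
    have : c.darts.countP (fun d => decide (d.toProd.2 = w)) =
        (c.darts.map (·.snd)).countP (fun x => decide (x = w)) := by
      rw [List.countP_map]; rfl
    rw [this, c.map_snd_darts]
    exact countP_eq_le_one hc.support_nodup w _ (by simp)
  have hdvd : (p : ℤ) ∣ ((zWt p o f c : ℤ) - (zWt p o g c : ℤ)) :=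
    dvd_sub (zWt_dvd hp o f c) (zWt_dvd hp o g c)
  have hlt : |((zWt p o f c : ℤ) - (zWt p o g c : ℤ))| < p := by
    rw [hdiff]
    calc |(c.darts.map (fun d => (cf d : ℤ) - (cg d : ℤ))).sum|
        ≤ ((p : ℤ) - 2 * q) * (c.darts.countP (fun d => decide (d.toProd.1 = w)) +
            c.darts.countP (fun d => decide (d.toProd.2 = w))) := hbound
      _ < p := by
          have hc1 := hcount1; have hc2 := hcount2
          have hnn : (0:ℤ) ≤ (p : ℤ) - 2*q := by push_cast; omega
          have : ((c.darts.countP (fun d => decide (d.toProd.1 = w)) : ℤ) +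
              c.darts.countP (fun d => decide (d.toProd.2 = w))) ≤ 2 := by push_cast; omega
          nlinarith [hq, h2, h4]
  have := Int.eq_zero_of_abs_lt_dvd hdvd hlt
  omega
end step

/-- For `2 ≤ p/q < 4` and a connected graph `G`: if the `(p,q)`-colouring `f`
reconfigures to `g` via single-vertex recolourings, then for every orientation of `G`
and every cycle `C`, `φ_f(C) = φ_g(C)`. -/
theorem stmt12 {V : Type*} (G : SimpleGraph V) (hconn : G.Connected)
    (p q : ℕ) (hq : 0 < q) (h2 : 2 * q ≤ p) (h4 : p < 4 * q)
    (f g : V → ZMod p) (hf : IsZCol G p q f) (hg : IsZCol G p q g)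
    (hrec : Relation.ReflTransGen (RecolStep G p q) f g) :
    ∀ o : V → V → Bool, (∀ u v : V, G.Adj u v → o u v = !o v u) →
      ∀ (a : V) (c : G.Walk a a), c.IsCycle → zWt p o f c = zWt p o g c := by
  intro o _ a c hc
  induction hrec with
  | refl => rfl
  | @tail b m hchain hstep ih =>
    have hcolb : IsZCol G p q b := by
      clear hstep ih
      induction hchain with
      | refl => exact hf
      | tail _ hstep' _ => exact hstep'.1
    exact (ih hcolb).trans (step_eq hq h2 h4 hcolb hstep o c hc)
end

section
/- Let p, q be positive integers with p ≥ 2q, k = ⌊p/q⌋, r = p - kq. Partition {0,...,p-1} into S_0 = [0, q+r-1] and S_i = [iq+r, (i+1)q+r-1] for 1 ≤ i ≤ k-1. Then the map γ sending i ∈ {0,...,k-1} to the left endpoint of S_i is a homomorphism from K_k to G_{p,q}; equivalently, for i ≠ j the left endpoints of S_i and S_j are adjacent in G_{p,q}. Moreover, for each i ≠ 0 the set S_i is an independent set in G_{p,q}. -/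
/-- Let `p ≥ 2q > 0`, `k = ⌊p/q⌋`, `r = p - kq`, and partition `{0,...,p-1}` into
`S_0 = [0, q+r-1]` and `S_i = [iq+r, (i+1)q+r-1]` for `1 ≤ i ≤ k-1`.  The map sending
`i` to the left endpoint of `S_i` (`0` for `i = 0`, `iq + r` otherwise) is a
homomorphism from `K_k` to `G_{p,q}`, and for each `i ≠ 0` the set `S_i` is independent
in `G_{p,q}`. -/
theorem stmt14 (p q k r : ℕ) (hq : 0 < q) (h2 : 2 * q ≤ p)
    (hk : k = p / q) (hr : r = p - k * q) :
    (∀ γ : Fin k → Fin p,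
      (∀ i : Fin k, (γ i).val = if i.val = 0 then 0 else i.val * q + r) →
      ∀ i j : Fin k, i ≠ j → (circClique p q).Adj (γ i) (γ j)) ∧
    (∀ i : ℕ, 1 ≤ i → i < k → ∀ a b : Fin p,
      i * q + r ≤ a.val → a.val ≤ (i + 1) * q + r - 1 →
      i * q + r ≤ b.val → b.val ≤ (i + 1) * q + r - 1 →
      ¬ (circClique p q).Adj a b) := by
  subst hk
  have hdm : p / q * q + p % q = p := Nat.div_add_mod' p q
  have hmod : p % q < q := Nat.mod_lt _ hq
  have hr' : r = p % q := by omega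
  have hp : p / q * q + r = p := by rw [hr']; exact hdm
  have hk2 : 2 ≤ p / q := by
    rw [Nat.le_div_iff_mul_le hq]; omega
  constructor
  · intro γ hγ i j hij
    have hi := hγ i
    have hj := hγ j
    have hne : i.val ≠ j.val := fun h => hij (Fin.ext h)
    have hil : i.val < p / q := i.isLt
    have hjl : j.val < p / q := j.isLt
    -- multiplicative facts
    have m1 : i.val < j.val → i.val * q + q ≤ j.val * q := by
      intro h
      calc i.val * q + q = (i.val + 1) * q := by ring
        _ ≤ j.val * q := Nat.mul_le_mul_right q (by omega)
    have m2 : j.val < i.val → j.val * q + q ≤ i.val * q := by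
      intro h
      calc j.val * q + q = (j.val + 1) * q := by ring
        _ ≤ i.val * q := Nat.mul_le_mul_right q (by omega)
    have m3 : i.val * q + q ≤ p / q * q := by
      calc i.val * q + q = (i.val + 1) * q := by ring
        _ ≤ p / q * q := Nat.mul_le_mul_right q (by omega)
    have m4 : j.val * q + q ≤ p / q * q := by
      calc j.val * q + q = (j.val + 1) * q := by ring
        _ ≤ p / q * q := Nat.mul_le_mul_right q (by omega)
    have m5 : 1 ≤ i.val → q ≤ i.val * q := fun h => le_mul_of_one_le_left' h
    have m6 : 1 ≤ j.val → q ≤ j.val * q := fun h => le_mul_of_one_le_left' h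
    refine ⟨fun h => ?_, ?_, ?_⟩
    · have hvv : (γ i).val = (γ j).val := congrArg Fin.val h
      rw [hi, hj] at hvv
      split at hvv <;> split at hvv <;> omega
    · split at hi <;> split at hj <;> rcases le_total (γ i).val (γ j).val with hle | hle <;> omega
    · split at hi <;> split at hj <;> rcases le_total (γ i).val (γ j).val with hle | hle <;> omega
  · intro i h1 h2 a b ha1 ha2 hb1 hb2 hadj
    obtain ⟨hne, hq1, hq2⟩ := hadj
    have hm : (i + 1) * q = i * q + q := by ring
    rcases le_total a.val b.val with hle | hle <;> omega
end

section
/- If a graph G contains an edge e such that G - e has no cycle of length divisible by 3, then G is 3-colourable. -/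
/-!
Label the vertices by `ZMod 3` and orient an edge `u → v` when `f v = f u + 1`. A directed cycle
would be a cycle of `G - e` of length divisible by 3, so every orientation of this kind is acyclic
and has sinks. Raising the label of a sink by one makes its monochromatic edges proper and creates
no new monochromatic edge. Counting how often each vertex is raised, a maximal run of raisings of
sinks outside a set `A` (inside the component of a vertex of `A`) is bounded by graph distance
and stops only at a labelling with a sink in `A`. With `A` the ends of monochromatic edges this
yields a proper 3-colouring of `G - e`, and with `A` the ends of `e` one that separates them.
Compactness passes from finite to arbitrary graphs.
-/

open Function Relation SimpleGraph

namespace SimpleGraph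

variable {V : Type*} {G : SimpleGraph V}

def NoCycleLengthDvd (G : SimpleGraph V) (k : ℕ) : Prop :=
  ∀ (v : V) (c : G.Walk v v), c.IsCycle → ¬ k ∣ c.length

theorem NoCycleLengthDvd.of_embedding {W : Type*} {G' : SimpleGraph W} {k : ℕ}
    (h : G'.NoCycleLengthDvd k) (φ : G ↪g G') : G.NoCycleLengthDvd k := fun _ c hc hk =>
  h _ (c.map φ.toHom) ((Walk.isCycle_map_iff_of_injective φ.injective).mpr hc)
    (by rwa [Walk.length_map])

section Orientation

variable {k : ℕ}

def UpAdj (G : SimpleGraph V) (f : V → ZMod k) (u v : V) : Prop := G.Adj u v ∧ f v = f u + 1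

def IsSink (G : SimpleGraph V) (f : V → ZMod k) (s : V) : Prop := ∀ w, ¬ G.UpAdj f s w

variable {f : V → ZMod k}

theorem Walk.apply_eq_add_length {u v : V} (p : G.Walk u v)
    (hp : ∀ d ∈ p.darts, f d.snd = f d.fst + 1) : f v = f u + p.length := by
  induction p with
  | nil => simp
  | cons h p ih =>
    simp only [Walk.darts_cons, List.mem_cons, forall_eq_or_imp] at hp
    rw [ih hp.2, hp.1, Walk.length_cons]
    push_cast
    ring

theorem exists_walk_of_reflTransGen_upAdj {u v : V} (h : ReflTransGen (G.UpAdj f) u v) :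
    ∃ p : G.Walk u v, ∀ d ∈ p.darts, f d.snd = f d.fst + 1 := by
  induction h using ReflTransGen.head_induction_on with
  | refl => exact ⟨.nil, by simp⟩
  | head huw _ ih =>
    obtain ⟨p, hp⟩ := ih
    exact ⟨.cons huw.1 p, by simpa [Walk.darts_cons, huw.2] using hp⟩

/-- A closed directed walk, shortcut to a path, is a cycle of `G` of length `0` in `ZMod k`;
`2 < k` rules out going back and forth along a single edge. -/
theorem NoCycleLengthDvd.not_transGen_upAdj (hk : 2 < k) (hG : G.NoCycleLengthDvd k) (u : V) :
    ¬ TransGen (G.UpAdj f) u u := by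
  classical
  intro huu
  obtain ⟨v, huv, hvu⟩ := TransGen.head'_iff.mp huu
  obtain ⟨q, hq⟩ := exists_walk_of_reflTransGen_upAdj hvu
  have hq' : ∀ d ∈ q.bypass.darts, f d.snd = f d.fst + 1 :=
    fun d hd => hq d (q.darts_bypass_subset_darts hd)
  have htwo : (2 : ZMod k) ≠ 0 := by
    rw [← Nat.cast_ofNat, Ne, ZMod.natCast_eq_zero_iff]
    exact fun h => by have := Nat.le_of_dvd two_pos h; omega
  have hcycle : (Walk.cons huv.1 q.bypass).IsCycle := by
    refine (Walk.cons_isCycle_iff _ _).mpr ⟨q.bypass_isPath, fun he => ?_⟩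
    obtain ⟨d, hd, hde⟩ := List.mem_map.mp he
    rcases Sym2.eq_iff.mp (show s(d.toProd.1, d.toProd.2) = s(u, v) from hde) with
      ⟨-, hdv⟩ | ⟨hdv, hdu⟩
    · have hv : v ∈ q.bypass.darts.map (·.snd) := List.mem_map.mpr ⟨d, hd, hdv⟩
      have := q.bypass_isPath.support_nodup
      rw [← Walk.cons_map_snd_darts] at this
      exact (List.nodup_cons.mp this).1 hv
    · have hvu := hq' d hd
      rw [hdv, hdu] at hvu
      exact htwo (by linear_combination -hvu - huv.2)
  have hlen := (Walk.cons huv.1 q.bypass).apply_eq_add_length (f := f) (by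
    simpa [Walk.darts_cons, huv.2] using hq')
  refine hG u _ hcycle ((ZMod.natCast_eq_zero_iff _ _).mp ?_)
  linear_combination -hlen

theorem NoCycleLengthDvd.exists_reachable_isSink [Finite V] (hk : 2 < k)
    (hG : G.NoCycleLengthDvd k) (f : V → ZMod k) (x : V) :
    ∃ s, G.Reachable x s ∧ G.IsSink f s := by
  let r := flip (TransGen (G.UpAdj f))
  have : IsTrans V r := ⟨fun _ _ _ h₁ h₂ => h₂.trans h₁⟩
  have : Std.Irrefl r := ⟨hG.not_transGen_upAdj hk⟩
  obtain ⟨s, hxs, hmin⟩ := (Finite.wellFounded_of_trans_of_irrefl r).has_min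
    {s | ReflTransGen (G.UpAdj f) x s} ⟨x, .refl⟩
  refine ⟨s, ?_, fun w hsw => hmin w (ReflTransGen.tail hxs hsw) (.single hsw)⟩
  exact (reachable_iff_reflTransGen _ _).mpr (ReflTransGen.mono (fun _ _ h => h.1) _ _ hxs)

theorem IsSink.eq_of_update_eq {g : V → ZMod k} {a u v : V} [DecidableEq V] (ha : G.IsSink g a)
    (huv : G.Adj u v) (h : update g a (g a + 1) u = update g a (g a + 1) v) :
    g u = g v ∧ u ≠ a := by
  by_cases hu : u = a
  · subst hu
    rw [update_self, update_of_ne huv.ne.symm] at h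
    exact (ha v ⟨huv, h.symm⟩).elim
  by_cases hv : v = a
  · subst hv
    rw [update_self, update_of_ne hu] at h
    exact (ha u ⟨huv.symm, h⟩).elim
  rw [update_of_ne hu, update_of_ne hv] at h
  exact ⟨h, hu⟩

end Orientation

section Raising

theorem Walk.apply_le_apply_add_length {t : V → ℕ} (ht : ∀ u v, G.Adj u v → t v ≤ t u + 1)
    {a b : V} (p : G.Walk a b) : t b ≤ t a + p.length := by
  induction p with
  | nil => simp
  | cons h p ih => have := ht _ _ h; rw [Walk.length_cons]; omega

private theorem zmod3_trichotomy : ∀ a b : ZMod 3, b = a ∨ b = a + 1 ∨ a = b + 1 := by decide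

private theorem zmod3_ne_add : ∀ a : ZMod 3, a ≠ a + 1 ∧ a ≠ a + 2 := by decide

variable {f : V → ZMod 3} {A : Set V} {x₀ : V}

/-- `t v` counts how often `v` has been raised, each time as a sink outside `A` in the component
of `x₀`; an edge oriented `u → v` by `f` has been reversed exactly when `t v = t u + 1`. -/
def IsRaising (G : SimpleGraph V) (f : V → ZMod 3) (A : Set V) (x₀ : V) (t : V → ℕ) : Prop :=
  (∀ v, (v ∈ A ∨ ¬ G.Reachable x₀ v) → t v = 0) ∧
    ∀ u v, G.UpAdj f u v → t v = t u ∨ t v = t u + 1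

namespace IsRaising

variable {t : V → ℕ}

theorem zero : G.IsRaising f A x₀ 0 := ⟨fun _ _ => rfl, fun _ _ _ => Or.inl rfl⟩

theorem add_ne_add (ht : G.IsRaising f A x₀ t) {u v : V} (huv : G.UpAdj f u v) :
    f u + t u ≠ f v + t v := by
  rcases ht.2 u v huv with h | h <;> rw [h, huv.2] <;> push_cast
  · exact fun e => (zmod3_ne_add (f u + t u)).1 (by linear_combination e)
  · exact fun e => (zmod3_ne_add (f u + t u)).2 (by linear_combination e)

theorem add_eq_add_iff (hA : ∀ u v, G.Adj u v → f u = f v → u ∈ A)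
    (ht : G.IsRaising f A x₀ t) {u v : V} (huv : G.Adj u v) :
    f u + t u = f v + t v ↔ f u = f v := by
  rcases zmod3_trichotomy (f u) (f v) with h | h | h
  · simp [ht.1 u (.inl (hA u v huv h.symm)), ht.1 v (.inl (hA v u huv.symm h)), h]
  · exact iff_of_false (ht.add_ne_add ⟨huv, h⟩) fun e => (zmod3_ne_add _).1 (e.trans h)
  · exact iff_of_false (Ne.symm (ht.add_ne_add ⟨huv.symm, h⟩))
      fun e => (zmod3_ne_add _).1 (e.symm.trans h)

theorem le_add_one (hA : ∀ u v, G.Adj u v → f u = f v → u ∈ A)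
    (ht : G.IsRaising f A x₀ t) {u v : V} (huv : G.Adj u v) : t v ≤ t u + 1 := by
  rcases zmod3_trichotomy (f u) (f v) with h | h | h
  · rw [ht.1 v (.inl (hA v u huv.symm h))]; omega
  · rcases ht.2 u v ⟨huv, h⟩ with h' | h' <;> omega
  · rcases ht.2 v u ⟨huv.symm, h⟩ with h' | h' <;> omega

theorem le_dist (hA : ∀ u v, G.Adj u v → f u = f v → u ∈ A) (hx₀ : x₀ ∈ A)
    (ht : G.IsRaising f A x₀ t) (v : V) : t v ≤ G.dist x₀ v := by
  by_cases hv : G.Reachable x₀ v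
  · obtain ⟨p, hp⟩ := hv.exists_walk_length_eq_dist
    have := p.apply_le_apply_add_length fun _ _ => ht.le_add_one hA
    rw [ht.1 x₀ (.inl hx₀)] at this
    omega
  · rw [ht.1 v (.inr hv)]
    exact Nat.zero_le _

/-- As `s ∉ A` is a sink, every edge at `s` points into `s`; raising `s` reverses them all. -/
theorem update_of_isSink [DecidableEq V] (ht : G.IsRaising f A x₀ t) {s : V}
    (hs : G.IsSink (fun v => f v + (t v : ZMod 3)) s) (hsA : s ∉ A) (hxs : G.Reachable x₀ s) :
    G.IsRaising f A x₀ (update t s (t s + 1)) := by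
  refine ⟨fun v hv => ?_, fun u v huv => ?_⟩
  · have hvs : v ≠ s := by rintro rfl; tauto
    rw [update_of_ne hvs, ht.1 v hv]
  · have hne := huv.1.ne
    rcases eq_or_ne v s with rfl | hv
    · rw [update_self, update_of_ne hne]
      rcases ht.2 u v huv with h | h
      · exact .inr (by rw [h])
      · refine (hs u ⟨huv.1.symm, ?_⟩).elim
        simp only [h, huv.2]; push_cast; ring_nf; reduce_mod_char
    rcases eq_or_ne u s with rfl | hu
    · rw [update_self, update_of_ne hne.symm]
      rcases ht.2 u v huv with h | h
      · refine (hs v ⟨huv.1, ?_⟩).elim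
        simp only [h, huv.2]; ring
      · exact .inl h
    · rw [update_of_ne hu, update_of_ne hv]
      exact ht.2 u v huv

end IsRaising

theorem NoCycleLengthDvd.exists_isSink_mem [Finite V] (hG : G.NoCycleLengthDvd 3)
    (hA : ∀ u v, G.Adj u v → f u = f v → u ∈ A) (hx₀ : x₀ ∈ A) :
    ∃ g : V → ZMod 3, (∀ v ∈ A, g v = f v) ∧ (∀ u v, G.Adj u v → (g u = g v ↔ f u = f v)) ∧
      ∃ a ∈ A, G.IsSink g a := by
  classical
  have := Fintype.ofFinite V
  have hfin : {t | G.IsRaising f A x₀ t}.Finite :=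
    (Set.finite_Iic fun v => G.dist x₀ v).subset fun t ht => IsRaising.le_dist hA hx₀ ht
  obtain ⟨t, ht, hmax⟩ := hfin.exists_maximal ⟨0, IsRaising.zero⟩
  refine ⟨fun v => f v + (t v : ZMod 3), fun v hv => by simp [ht.1 v (.inl hv)],
    fun u v => ht.add_eq_add_iff hA, ?_⟩
  obtain ⟨s, hxs, hs⟩ :=
    hG.exists_reachable_isSink (by norm_num) (fun v => f v + (t v : ZMod 3)) x₀
  by_contra! hA'
  have hsA : s ∉ A := fun h => hA' s h hs
  have := hmax (ht.update_of_isSink hs hsA hxs) (le_update_self_iff.mpr (Nat.le_succ _)) s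
  simp at this

end Raising

/-- Among all labellings take one whose set of monochromatic edges is minimal; raising a sink
incident to a monochromatic edge would shrink that set. -/
theorem NoCycleLengthDvd.nonempty_coloring [Finite V] (hG : G.NoCycleLengthDvd 3) :
    Nonempty (G.Coloring (ZMod 3)) := by
  classical
  let mono (g : V → ZMod 3) : Set (V × V) := {p | G.Adj p.1 p.2 ∧ g p.1 = g p.2}
  obtain ⟨f, -, hf⟩ := Set.finite_univ.exists_minimalFor mono Set.univ ⟨0, trivial⟩
  refine ⟨Coloring.mk f fun {u v} huv hfuv => ?_⟩
  obtain ⟨g, -, hgf, a, ⟨b, hab, hfab⟩, ha⟩ :=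
    hG.exists_isSink_mem (A := {u | ∃ v, G.Adj u v ∧ f u = f v}) (fun u v h h' => ⟨v, h, h'⟩)
      ⟨v, huv, hfuv⟩
  have hsub : mono (update g a (g a + 1)) ⊆ mono f := fun p ⟨hp, hp'⟩ =>
    ⟨hp, (hgf _ _ hp).mp (ha.eq_of_update_eq hp hp').1⟩
  have hab' : (a, b) ∈ mono (update g a (g a + 1)) := hf trivial hsub ⟨hab, hfab⟩
  exact (ha.eq_of_update_eq hab hab'.2).2 rfl

theorem NoCycleLengthDvd.exists_coloring_ne [Finite V] (hG : G.NoCycleLengthDvd 3) {x y : V}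
    (hxy : x ≠ y) : ∃ c : G.Coloring (ZMod 3), c x ≠ c y := by
  classical
  obtain ⟨c⟩ := hG.nonempty_coloring
  by_cases hcxy : c x ≠ c y
  · exact ⟨c, hcxy⟩
  obtain ⟨g, hgc, hg, a, ha, hsink⟩ := hG.exists_isSink_mem (f := c) (A := {x, y})
    (fun u v huv h => (c.valid huv h).elim) (Set.mem_insert x _)
  have hgxy : g x = g y := by
    rw [hgc x (by simp), hgc y (by simp)]
    exact not_not.mp hcxy
  refine ⟨Coloring.mk (update g a (g a + 1)) fun huv h =>
    c.valid huv ((hg _ _ huv).mp (hsink.eq_of_update_eq huv h).1), ?_⟩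
  change update g a (g a + 1) x ≠ update g a (g a + 1) y
  rcases ha with rfl | rfl
  · simp [update_of_ne hxy.symm, hgxy]
  · simp [update_of_ne hxy, hgxy]

theorem NoCycleLengthDvd.colorable_sup_edge_of_finite [Finite V] (hG : G.NoCycleLengthDvd 3)
    (x y : V) : (G ⊔ edge x y).Colorable 3 := by
  rcases eq_or_ne x y with rfl | hxy
  · obtain ⟨c⟩ := hG.nonempty_coloring
    simpa [edge_self_eq_bot] using c.colorable
  obtain ⟨c, hc⟩ := hG.exists_coloring_ne hxy
  have hc' : ∀ {u v}, (G ⊔ edge x y).Adj u v → c u ≠ c v := by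
    intro u v huv
    rw [sup_adj, edge_adj] at huv
    rcases huv with huv | ⟨⟨rfl, rfl⟩ | ⟨rfl, rfl⟩, -⟩
    exacts [c.valid huv, hc, hc.symm]
  simpa using (Coloring.mk c hc').colorable

/-- By compactness it suffices to colour the finite graphs induced on `{x, y} ∪ S`. -/
theorem NoCycleLengthDvd.colorable_sup_edge (hG : G.NoCycleLengthDvd 3) (x y : V) :
    (G ⊔ edge x y).Colorable 3 := by
  refine nonempty_hom_of_forall_finite_subgraph_hom fun G' hG' => ?_
  let K : Set V := insert x (insert y G'.verts)
  have : Finite K := ((hG'.insert y).insert x).to_subtype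
  have hK := (hG.of_embedding (Embedding.induce K)).colorable_sup_edge_of_finite
    ⟨x, Set.mem_insert x _⟩ ⟨y, Set.mem_insert_of_mem x (Set.mem_insert y _)⟩
  refine hK.some.comp ⟨fun v => ⟨v, Set.mem_insert_of_mem x (Set.mem_insert_of_mem y v.2)⟩,
    fun {u v} huv => ?_⟩
  simpa [edge_adj, Subtype.ext_iff] using G'.adj_sub huv

end SimpleGraph

theorem stmt16_general {V : Type*} (G : SimpleGraph V) (e : Sym2 V)
    (h : ∀ (v : V) (c : (G.deleteEdges {e}).Walk v v), c.IsCycle → ¬ (3 ∣ c.length)) :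
    G.Colorable 3 := by
  induction e using Sym2.ind with
  | _ x y =>
  have hle : G ≤ G.deleteEdges {s(x, y)} ⊔ edge x y := by
    rw [sup_comm]
    exact (deleteEdges_le_iff _ _).mp le_rfl
  exact (NoCycleLengthDvd.colorable_sup_edge h x y).mono_left hle

/-- If a graph `G` contains an edge `e` such that `G - e` has no cycle of length
divisible by 3, then `G` is 3-colourable. -/
theorem stmt16 {V : Type*} (G : SimpleGraph V) (e : Sym2 V) (he : e ∈ G.edgeSet)
    (h : ∀ (v : V) (c : (G.deleteEdges {e}).Walk v v), c.IsCycle → ¬ (3 ∣ c.length)) :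
    G.Colorable 3 :=
  stmt16_general G e h
end
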